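/- Let 0 < α < 1/2 and set γ(α) = α/(2α−1) and z(y,α) = y²(2α−1)/2. Then lim_{y → 0⁺} [ α·y²·W(γ(α)+1, 5/2, z(y,α)) + W(γ(α), 3/2, z(y,α)) ] = Γ(3/2 − γ(α)) / Γ(3/2). -/

import Mathlib

open Real Filter Polynomial

/-- Confluent hypergeometric function of the first kind,
`M(γ,β,z) = ∑ (γ)⁽ⁿ⁾ zⁿ / ((β)⁽ⁿ⁾ n!)`. -/
noncomputable def M (γ β z : ℝ) : ℝ :=
  ∑' n : ℕ, ((ascPochhammer ℝ n).eval γ * z ^ n) /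
    ((ascPochhammer ℝ n).eval β * (Nat.factorial n : ℝ))

/-- The solution `W(γ,β,z)` of Kummer's equation used for `z < 0`. -/
noncomputable def W (γ β z : ℝ) : ℝ :=
  Real.Gamma (β - γ) / Real.Gamma β * M γ β z -
    Real.Gamma (1 - γ) / Real.Gamma (2 - β) * (-z) ^ (1 - β) * M (γ - β + 1) (2 - β) z

/-!
With `γ = α / (2α - 1)` and `z = y² (2α - 1) / 2` one has `α y² = 2 γ z`, and `z → 0⁻` as `y → 0⁺`.
Expanding `W`, the two terms of order `(-z)^(-1/2)` carry opposite coefficients `∓ γ Γ(-γ) / √π`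
(by `Γ(1 - γ) = -γ Γ(-γ)` and `Γ(-1/2) = -2√π`), so they combine to
`(-z)^(-1/2) ((M(γ - 1/2, 1/2, z) - 1) - (M(γ - 1/2, -1/2, z) - 1)) = O((-z)^(1/2))`,
because `M(a, b, z) = 1 + O(z)` by the ratio test on the coefficients of the series.
The remaining terms tend to `Γ(3/2 - γ) / Γ(3/2)`.
-/

open Topology Asymptotics

noncomputable def kummerCoeff (γ β : ℝ) (n : ℕ) : ℝ :=
  (ascPochhammer ℝ n).eval γ / ((ascPochhammer ℝ n).eval β * (n.factorial : ℝ))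

section KummerSeries

variable (γ β : ℝ)

@[simp]
lemma kummerCoeff_zero : kummerCoeff γ β 0 = 1 := by
  simp [kummerCoeff]

lemma kummerCoeff_succ (n : ℕ) :
    kummerCoeff γ β (n + 1) =
      kummerCoeff γ β n * ((γ + n) / (β + n) * (1 / ((n : ℝ) + 1))) := by
  simp only [kummerCoeff, ascPochhammer_succ_eval, Nat.factorial_succ, Nat.cast_mul,
    Nat.cast_succ]
  field_simp

lemma M_eq_tsum (z : ℝ) : M γ β z = ∑' n, kummerCoeff γ β n * z ^ n := by
  simp only [M, kummerCoeff, div_mul_eq_mul_div]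

lemma summable_abs_kummerCoeff : Summable fun n => |kummerCoeff γ β n| := by
  have hratio : Tendsto (fun n : ℕ => (γ + n) / (β + n) * (1 / ((n : ℝ) + 1))) atTop (𝓝 0) := by
    simpa using (tendsto_add_mul_div_add_mul_atTop_nhds γ β 1 one_ne_zero).mul
      (tendsto_one_div_add_atTop_nhds_zero_nat (𝕜 := ℝ))
  refine summable_of_ratio_norm_eventually_le (r := 1 / 2) (by norm_num) ?_
  filter_upwards [hratio.norm.eventually (gt_mem_nhds (by norm_num : ‖(0 : ℝ)‖ < 1 / 2))]
    with n hn
  simp only [Real.norm_eq_abs, abs_abs, kummerCoeff_succ, abs_mul] at hn ⊢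
  nlinarith [abs_nonneg (kummerCoeff γ β n)]

lemma abs_M_sub_one_le {z : ℝ} (hz : |z| ≤ 1) :
    |M γ β z - 1| ≤ (∑' n, |kummerCoeff γ β (n + 1)|) * |z| := by
  have hpow : ∀ n, |z ^ n| ≤ 1 := fun n => by
    simpa only [abs_pow] using pow_le_one₀ (abs_nonneg z) hz
  have hterm : ∀ (a : ℝ) (n : ℕ), ‖a * z ^ n‖ ≤ |a| := fun a n => by
    rw [Real.norm_eq_abs, abs_mul]; exact mul_le_of_le_one_right (abs_nonneg a) (hpow n)
  have htail := (summable_nat_add_iff 1).2 (summable_abs_kummerCoeff γ β)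
  have hsum := (summable_abs_kummerCoeff γ β).of_norm_bounded fun n => hterm (kummerCoeff γ β n) n
  have htail_sum := htail.of_norm_bounded fun n => hterm (kummerCoeff γ β (n + 1)) n
  have hshift : M γ β z - 1 = z * ∑' n, kummerCoeff γ β (n + 1) * z ^ n := by
    rw [M_eq_tsum, hsum.tsum_eq_zero_add, ← tsum_mul_left]
    simp only [kummerCoeff_zero, pow_zero, mul_one, add_sub_cancel_left]
    exact tsum_congr fun n => by ring
  calc |M γ β z - 1| = |z| * |∑' n, kummerCoeff γ β (n + 1) * z ^ n| := by
        rw [hshift, abs_mul]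
    _ ≤ |z| * ∑' n, |kummerCoeff γ β (n + 1)| := by
        gcongr
        rw [← Real.norm_eq_abs]
        exact (norm_tsum_le_tsum_norm htail_sum.norm).trans
          (htail_sum.norm.tsum_le_tsum (fun n => hterm _ n) htail)
    _ = _ := mul_comm _ _

end KummerSeries

section KummerAsymptotics

variable (γ β : ℝ)

lemma isBigO_M_sub_one : (fun z => M γ β z - 1) =O[𝓝 0] id := by
  refine IsBigO.of_bound (∑' n, |kummerCoeff γ β (n + 1)|) ?_
  filter_upwards [Icc_mem_nhds (neg_lt_zero.2 one_pos) one_pos] with z hz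
  simpa only [Real.norm_eq_abs, id] using abs_M_sub_one_le γ β (abs_le.2 hz)

lemma tendsto_M_nhds_zero : Tendsto (M γ β) (𝓝 0) (𝓝 1) := by
  simpa using ((isBigO_M_sub_one γ β).trans_tendsto tendsto_id).add_const 1

lemma tendsto_rpow_mul_M_sub_one :
    Tendsto (fun z => (-z) ^ (-(1 / 2) : ℝ) * (M γ β z - 1)) (𝓝[<] 0) (𝓝 0) := by
  have hsqrt : Tendsto (fun z : ℝ => -(-z) ^ (1 / 2 : ℝ)) (𝓝[<] 0) (𝓝 0) := by
    have hcont : Continuous fun z : ℝ => -(-z) ^ (1 / 2 : ℝ) :=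
      (continuous_neg.rpow_const fun _ => Or.inr (by norm_num)).neg
    simpa using (hcont.tendsto 0).mono_left (nhdsWithin_le_nhds (s := Set.Iio 0))
  refine ((isBigO_refl (fun z : ℝ => (-z) ^ (-(1 / 2) : ℝ)) _).mul
    ((isBigO_M_sub_one γ β).mono nhdsWithin_le_nhds)).trans_tendsto (hsqrt.congr' ?_)
  filter_upwards [self_mem_nhdsWithin] with z (hz : z < 0)
  have h := Real.rpow_add_one (neg_ne_zero.2 hz.ne) (-(1 / 2))
  norm_num at h
  simp only [id, h]
  ring

end KummerAsymptotics

lemma Real.Gamma_neg_one_half : Real.Gamma (-(1 / 2)) = -2 * √π := by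
  have h := Real.Gamma_add_one (show (-(1 / 2) : ℝ) ≠ 0 by norm_num)
  rw [show (-(1 / 2) + 1 : ℝ) = 1 / 2 by norm_num, Real.Gamma_one_half_eq] at h
  linarith

lemma two_mul_W_add_W_eq {γ z : ℝ} (hγ : γ ≠ 0) (hz : z < 0) :
    2 * γ * z * W (γ + 1) (5 / 2) z + W γ (3 / 2) z =
      2 * γ * Real.Gamma (3 / 2 - γ) / Real.Gamma (5 / 2) * (z * M (γ + 1) (5 / 2) z) +
        Real.Gamma (3 / 2 - γ) / Real.Gamma (3 / 2) * M γ (3 / 2) z +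
        γ * Real.Gamma (-γ) / √π *
          ((-z) ^ (-(1 / 2) : ℝ) * (M (γ - 1 / 2) (1 / 2) z - 1) -
            (-z) ^ (-(1 / 2) : ℝ) * (M (γ - 1 / 2) (-(1 / 2)) z - 1)) := by
  have hΓ : Real.Gamma (1 - γ) = -γ * Real.Gamma (-γ) := by
    rw [← Real.Gamma_add_one (neg_ne_zero.2 hγ)]; ring_nf
  have hpow : (-z) ^ (-(3 / 2) : ℝ) = (-z) ^ (-(1 / 2) : ℝ) / (-z) := by
    rw [eq_div_iff (neg_ne_zero.2 hz.ne), ← Real.rpow_add_one (neg_ne_zero.2 hz.ne)]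
    norm_num
  have hπ : √π ≠ 0 := (Real.sqrt_pos.2 Real.pi_pos).ne'
  have hz' : z ≠ 0 := hz.ne
  rw [W, W, show (5 : ℝ) / 2 - (γ + 1) = 3 / 2 - γ by ring, show 1 - (γ + 1) = -γ by ring,
    show γ + 1 - 5 / 2 + 1 = γ - 1 / 2 by ring, show γ - 3 / 2 + 1 = γ - 1 / 2 by ring]
  norm_num only [hΓ, hpow, Real.Gamma_neg_one_half, Real.Gamma_one_half_eq]
  field_simp
  ring

lemma tendsto_two_mul_W_add_W {γ : ℝ} (hγ : γ ≠ 0) :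
    Tendsto (fun z => 2 * γ * z * W (γ + 1) (5 / 2) z + W γ (3 / 2) z) (𝓝[<] 0)
      (𝓝 (Real.Gamma (3 / 2 - γ) / Real.Gamma (3 / 2))) := by
  have hM (a b : ℝ) : Tendsto (M a b) (𝓝[<] 0) (𝓝 1) :=
    (tendsto_M_nhds_zero a b).mono_left nhdsWithin_le_nhds
  have hzM : Tendsto (fun z => z * M (γ + 1) (5 / 2) z) (𝓝[<] 0) (𝓝 0) := by
    simpa using (tendsto_nhdsWithin_of_tendsto_nhds tendsto_id).mul (hM (γ + 1) (5 / 2))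
  have hsingular := (tendsto_rpow_mul_M_sub_one (γ - 1 / 2) (1 / 2)).sub
    (tendsto_rpow_mul_M_sub_one (γ - 1 / 2) (-(1 / 2)))
  have hlim := ((hzM.const_mul (2 * γ * Real.Gamma (3 / 2 - γ) / Real.Gamma (5 / 2))).add
    ((hM γ (3 / 2)).const_mul (Real.Gamma (3 / 2 - γ) / Real.Gamma (3 / 2)))).add
    (hsingular.const_mul (γ * Real.Gamma (-γ) / √π))
  simp only [mul_zero, zero_add, sub_zero, add_zero, mul_one] at hlim
  refine hlim.congr' ?_
  filter_upwards [self_mem_nhdsWithin] with z (hz : z < 0)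
  exact (two_mul_W_add_W_eq hγ hz).symm

theorem stmt_17 (α : ℝ) (hα : 0 < α) (hα' : α < 1 / 2) :
    Tendsto
      (fun y : ℝ =>
        α * y ^ 2 * W (α / (2 * α - 1) + 1) (5 / 2) (y ^ 2 * (2 * α - 1) / 2) +
          W (α / (2 * α - 1)) (3 / 2) (y ^ 2 * (2 * α - 1) / 2))
      (nhdsWithin 0 (Set.Ioi (0 : ℝ)))
      (nhds (Real.Gamma (3 / 2 - α / (2 * α - 1)) / Real.Gamma (3 / 2))) := by
  have hden : 2 * α - 1 < 0 := by linarith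
  have hz : Tendsto (fun y : ℝ => y ^ 2 * (2 * α - 1) / 2) (𝓝[>] 0) (𝓝[<] 0) := by
    refine tendsto_nhdsWithin_of_tendsto_nhds_of_eventually_within _ ?_ ?_
    · have h := ((continuous_pow 2).mul_const (2 * α - 1)).div_const 2 |>.tendsto 0
      simpa using h.mono_left nhdsWithin_le_nhds
    · filter_upwards [self_mem_nhdsWithin] with y (hy : 0 < y)
      exact div_neg_of_neg_of_pos (mul_neg_of_pos_of_neg (pow_pos hy 2) hden) two_pos
  refine ((tendsto_two_mul_W_add_W (div_ne_zero hα.ne' hden.ne)).comp hz).congr fun y => ?_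
  simp only [Function.comp_apply]
  congr 2
  field_simp [hden.ne]
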